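/- With d_j = sin((j+1)π/12)/sin(π/12) for 0 ≤ j ≤ 10, the identity (d₀ + d₄ + d₆ + d₁₀)² = Σ_{j=0}^{10} d_j² holds. -/

import Mathlib

theorem lagrangian_algebra_su2_10 :
    let d : ℕ → ℝ := fun j => Real.sin (((j : ℝ) + 1) * Real.pi / 12) / Real.sin (Real.pi / 12)
    (d 0 + d 4 + d 6 + d 10) ^ 2 = ∑ j ∈ Finset.range 11, d j ^ 2 := by
  intro d
  have hπ := Real.pi_pos
  set s := Real.sin (Real.pi / 12) with hs_def
  set c := Real.cos (Real.pi / 12) with hc_def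
  have hs : s ≠ 0 :=
    ne_of_gt (Real.sin_pos_of_pos_of_lt_pi (by positivity) (by linarith))
  have hpyth : s ^ 2 + c ^ 2 = 1 := Real.sin_sq_add_cos_sq _
  have hsc : 2 * (s * c) = 1 / 2 := by
    have h := Real.sin_two_mul (Real.pi / 12)
    rw [show 2 * (Real.pi / 12) = Real.pi / 6 by ring, Real.sin_pi_div_six] at h
    linarith
  have v1 : Real.sin (((0:ℝ) + 1) * Real.pi / 12) = s := by norm_num [hs_def]
  have v2 : Real.sin (((1:ℝ) + 1) * Real.pi / 12) = 1 / 2 := by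
    rw [show ((1:ℝ) + 1) * Real.pi / 12 = Real.pi / 6 by ring, Real.sin_pi_div_six]
  have v3 : Real.sin (((2:ℝ) + 1) * Real.pi / 12) = Real.sqrt 2 / 2 := by
    rw [show ((2:ℝ) + 1) * Real.pi / 12 = Real.pi / 4 by ring, Real.sin_pi_div_four]
  have v4 : Real.sin (((3:ℝ) + 1) * Real.pi / 12) = Real.sqrt 3 / 2 := by
    rw [show ((3:ℝ) + 1) * Real.pi / 12 = Real.pi / 3 by ring, Real.sin_pi_div_three]
  have v5 : Real.sin (((4:ℝ) + 1) * Real.pi / 12) = c := by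
    rw [show ((4:ℝ) + 1) * Real.pi / 12 = Real.pi / 2 - Real.pi / 12 by ring,
      Real.sin_pi_div_two_sub]
  have v6 : Real.sin (((5:ℝ) + 1) * Real.pi / 12) = 1 := by
    rw [show ((5:ℝ) + 1) * Real.pi / 12 = Real.pi / 2 by ring, Real.sin_pi_div_two]
  have v7 : Real.sin (((6:ℝ) + 1) * Real.pi / 12) = c := by
    rw [show ((6:ℝ) + 1) * Real.pi / 12 = Real.pi - (Real.pi / 2 - Real.pi / 12) by ring,
      Real.sin_pi_sub, Real.sin_pi_div_two_sub]
  have v8 : Real.sin (((7:ℝ) + 1) * Real.pi / 12) = Real.sqrt 3 / 2 := by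
    rw [show ((7:ℝ) + 1) * Real.pi / 12 = Real.pi - Real.pi / 3 by ring,
      Real.sin_pi_sub, Real.sin_pi_div_three]
  have v9 : Real.sin (((8:ℝ) + 1) * Real.pi / 12) = Real.sqrt 2 / 2 := by
    rw [show ((8:ℝ) + 1) * Real.pi / 12 = Real.pi - Real.pi / 4 by ring,
      Real.sin_pi_sub, Real.sin_pi_div_four]
  have v10 : Real.sin (((9:ℝ) + 1) * Real.pi / 12) = 1 / 2 := by
    rw [show ((9:ℝ) + 1) * Real.pi / 12 = Real.pi - Real.pi / 6 by ring,
      Real.sin_pi_sub, Real.sin_pi_div_six]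
  have v11 : Real.sin (((10:ℝ) + 1) * Real.pi / 12) = s := by
    rw [show ((10:ℝ) + 1) * Real.pi / 12 = Real.pi - Real.pi / 12 by ring,
      Real.sin_pi_sub]
  have h2 : Real.sqrt 2 ^ 2 = 2 := Real.sq_sqrt (by norm_num)
  have h3 : Real.sqrt 3 ^ 2 = 3 := Real.sq_sqrt (by norm_num)
  simp only [d, Finset.sum_range_succ, Finset.sum_range_zero, Nat.cast_ofNat,
    Nat.cast_zero, Nat.cast_one]
  rw [← hs_def]
  rw [v1, v2, v3, v4, v5, v6, v7, v8, v9, v10, v11]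
  have key : (s + c + c + s) ^ 2 =
      s ^ 2 + (1/2 : ℝ) ^ 2 + (Real.sqrt 2 / 2) ^ 2 + (Real.sqrt 3 / 2) ^ 2 + c ^ 2 + 1 ^ 2 +
        c ^ 2 + (Real.sqrt 3 / 2) ^ 2 + (Real.sqrt 2 / 2) ^ 2 + (1/2 : ℝ) ^ 2 + s ^ 2 := by
    nlinarith [hpyth, hsc, h2, h3]
  simp only [div_pow, ← add_div, zero_add]
  rw [key]
  ring
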